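/- Let R be a commutative noetherian ring, M a complex with bounded homology in D(R), and C a nonempty collection of objects of D(R) containing all free R-modules. For the Adams resolution syzygy Ω^n(M), the inequality level_C(M) ≤ level_C(Ω^n(M)) + n holds for all n ≥ 0. -/
import Mathlib


universe u

open CategoryTheory CategoryTheory.Limits CategoryTheory.Abelian CategoryTheory.Pretriangulated

noncomputable instance hasDerCatModule (R : Type u) [CommRing R] :
    HasDerivedCategory.{u+1} (ModuleCat.{u} R) :=
  HasDerivedCategory.standard _

instance hasExtModule (R : Type u) [CommRing R] : HasExt.{u+1} (ModuleCat.{u} R) :=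
  hasExt_of_hasDerivedCategory _

section Level

variable {D : Type*} [Category D] [Preadditive D] [HasZeroObject D] [HasShift D ℤ]

/-- `P` is a biproduct (direct sum) of `X` and `Y`. -/
def IsBiprodObj (P X Y : D) : Prop :=
  ∃ (i : X ⟶ P) (j : Y ⟶ P) (p : P ⟶ X) (q : P ⟶ Y),
    i ≫ p = 𝟙 X ∧ j ≫ q = 𝟙 Y ∧ i ≫ q = 0 ∧ j ≫ p = 0 ∧ p ≫ i + q ≫ j = 𝟙 P

/-- The first thickening `thick¹ S`: the closure of `S` under isomorphisms, shifts,
finite direct sums and direct summands (together with zero objects). -/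
inductive Thick1 (S : Set D) : D → Prop
  | of {X : D} (h : X ∈ S) : Thick1 S X
  | zero {X : D} (h : IsZero X) : Thick1 S X
  | iso {X Y : D} (e : X ≅ Y) (h : Thick1 S X) : Thick1 S Y
  | shift {X : D} (n : ℤ) (h : Thick1 S X) : Thick1 S (X⟦n⟧)
  | sum {X Y P : D} (hX : Thick1 S X) (hY : Thick1 S Y) (hP : IsBiprodObj P X Y) :
      Thick1 S P
  | summand {X Y : D} (i : X ⟶ Y) (r : Y ⟶ X) (hir : i ≫ r = 𝟙 X) (hY : Thick1 S Y) :
      Thick1 S X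

variable [∀ n : ℤ, (shiftFunctor D n).Additive] [Pretriangulated D]

/-- The `n`-th thickening `thickⁿ S`: an object `M` is in `thickⁿ⁺¹ S` if there is a
distinguished triangle `K ⟶ L ⊕ M ⟶ N ⟶ K⟦1⟧` with `K ∈ thick¹ S` and `N ∈ thickⁿ S`. -/
def ThickN (S : Set D) : ℕ → Set D
  | 0 => {X | IsZero X}
  | (n + 1) => {M | ∃ (K P N L : D) (f : K ⟶ P) (g : P ⟶ N) (h : N ⟶ K⟦(1 : ℤ)⟧),
      IsBiprodObj P L M ∧ (Triangle.mk f g h ∈ distTriang D) ∧ Thick1 S K ∧ N ∈ ThickN S n}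

/-- The level of an object `X` with respect to a collection `S` of objects. -/
noncomputable def levelIn (S : Set D) (X : D) : ℕ∞ :=
  sInf {n : ℕ∞ | ∃ m : ℕ, (m : ℕ∞) = n ∧ X ∈ ThickN S m}

end Level

section Collections

variable (R : Type u) [CommRing R]

/-- The collection of (stalks of) projective modules in the derived category. -/
def projObjs : Set (DerivedCategory (ModuleCat.{u} R)) :=
  {X | ∃ N : ModuleCat.{u} R, Projective N ∧
    X = (DerivedCategory.singleFunctor (ModuleCat.{u} R) 0).obj N}

/-- The collection of (stalks of) injective modules in the derived category. -/
def injObjs : Set (DerivedCategory (ModuleCat.{u} R)) :=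
  {X | ∃ N : ModuleCat.{u} R, Injective N ∧
    X = (DerivedCategory.singleFunctor (ModuleCat.{u} R) 0).obj N}

/-- The collection of (stalks of) flat modules in the derived category. -/
def flatObjs : Set (DerivedCategory (ModuleCat.{u} R)) :=
  {X | ∃ N : ModuleCat.{u} R, Module.Flat R N ∧
    X = (DerivedCategory.singleFunctor (ModuleCat.{u} R) 0).obj N}

/-- A complex has bounded homology. -/
def HasBoundedHomology (M : CochainComplex (ModuleCat.{u} R) ℤ) : Prop :=
  ∃ a b : ℤ, ∀ i, (i < a ∨ b < i) → IsZero (M.homology i)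

end Collections

/-- One step of an Adams (projective) resolution in the derived category: there is a
distinguished triangle `N ⟶ F ⟶ M ⟶ N⟦1⟧` where `F` is a bounded complex of free modules
with zero differential which is surjective on homology. -/
def AdamsStep (R : Type u) [CommRing R] (M N : CochainComplex (ModuleCat.{u} R) ℤ) : Prop :=
  ∃ (F : CochainComplex (ModuleCat.{u} R) ℤ) (φ : F ⟶ M)
    (f : DerivedCategory.Q.obj N ⟶ DerivedCategory.Q.obj F)
    (h : DerivedCategory.Q.obj M ⟶ (DerivedCategory.Q.obj N)⟦(1 : ℤ)⟧),
    (∀ i, Module.Free R ↥(F.X i)) ∧ (∀ i j, F.d i j = 0) ∧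
    (∃ a b : ℤ, ∀ i, (i < a ∨ b < i) → IsZero (F.X i)) ∧
    (∀ i, Epi ((HomologicalComplex.homologyFunctor (ModuleCat.{u} R)
      (ComplexShape.up ℤ) i).map φ)) ∧
    (Triangle.mk f (DerivedCategory.Q.map φ) h ∈
      distTriang (DerivedCategory (ModuleCat.{u} R)))

/-- `Ω` is an `n`-th Adams syzygy of `M`. -/
def IsAdamsSyzygy (R : Type u) [CommRing R] (M : CochainComplex (ModuleCat.{u} R) ℤ)
    (n : ℕ) (Ω : CochainComplex (ModuleCat.{u} R) ℤ) : Prop :=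
  ∃ seq : ℕ → CochainComplex (ModuleCat.{u} R) ℤ, seq 0 = M ∧ seq n = Ω ∧
    ∀ k < n, AdamsStep R (seq k) (seq (k + 1))

section AuxGen

open ZeroObject

variable {D : Type*} [Category D] [Preadditive D] [HasZeroObject D] [HasShift D ℤ]
variable {D' : Type*} [Category D'] [Preadditive D'] [HasZeroObject D'] [HasShift D' ℤ]

lemma IsBiprodObj.map (F : D ⥤ D') [F.Additive] {P X Y : D} (h : IsBiprodObj P X Y) :
    IsBiprodObj (F.obj P) (F.obj X) (F.obj Y) := by
  obtain ⟨i, j, p, q, h1, h2, h3, h4, h5⟩ := h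
  refine ⟨F.map i, F.map j, F.map p, F.map q, ?_, ?_, ?_, ?_, ?_⟩
  · rw [← F.map_comp, h1, F.map_id]
  · rw [← F.map_comp, h2, F.map_id]
  · rw [← F.map_comp, h3, F.map_zero]
  · rw [← F.map_comp, h4, F.map_zero]
  · rw [← F.map_comp, ← F.map_comp, ← F.map_add, h5, F.map_id]

lemma isBiprodObj_zero_self (X : D) : IsBiprodObj X (0 : D) X := by
  refine ⟨0, 𝟙 X, 0, 𝟙 X, ?_, by simp, by simp, by simp, by simp⟩
  exact (isZero_zero D).eq_of_src _ _

variable [∀ n : ℤ, (shiftFunctor D n).Additive] [Pretriangulated D]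

lemma thickN_shift {S : Set D} : ∀ {m : ℕ} {X : D}, X ∈ ThickN S m → ∀ k : ℤ, X⟦k⟧ ∈ ThickN S m
  | 0, X, hX, k => (shiftFunctor D k).map_isZero hX
  | (m + 1), X, hX, k => by
    obtain ⟨K, P, N, L, f, g, h, hbip, hdist, hK, hN⟩ := hX
    exact ⟨K⟦k⟧, P⟦k⟧, N⟦k⟧, L⟦k⟧,
      ((Triangle.shiftFunctor D k).obj (Triangle.mk f g h)).mor₁,
      ((Triangle.shiftFunctor D k).obj (Triangle.mk f g h)).mor₂,
      ((Triangle.shiftFunctor D k).obj (Triangle.mk f g h)).mor₃,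
      hbip.map (shiftFunctor D k),
      Triangle.shift_distinguished _ hdist k,
      Thick1.shift k hK, thickN_shift hN k⟩

lemma thickN_step {S : Set D} {m : ℕ} (T : Triangle D) (hT : T ∈ distTriang D)
    (hK : Thick1 S T.obj₁) (hN : T.obj₃ ∈ ThickN S m) : T.obj₂ ∈ ThickN S (m + 1) :=
  ⟨T.obj₁, T.obj₂, T.obj₃, 0, T.mor₁, T.mor₂, T.mor₃, isBiprodObj_zero_self _, hT, hK, hN⟩

lemma levelIn_le {S : Set D} {X : D} {m : ℕ} (h : X ∈ ThickN S m) :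
    levelIn S X ≤ (m : ℕ∞) :=
  sInf_le ⟨m, rfl, h⟩

open Classical in
lemma levelIn_eq_top_or_mem (S : Set D) (X : D) :
    levelIn S X = ⊤ ∨ ∃ m : ℕ, levelIn S X = (m : ℕ∞) ∧ X ∈ ThickN S m := by
  by_cases hT : ∃ m : ℕ, X ∈ ThickN S m
  · refine Or.inr ⟨Nat.find hT, le_antisymm (levelIn_le (Nat.find_spec hT)) ?_, Nat.find_spec hT⟩
    refine le_sInf ?_
    rintro b ⟨m, rfl, hm⟩
    exact_mod_cast Nat.find_min' hT hm
  · refine Or.inl ?_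
    rw [levelIn, sInf_eq_top]
    rintro b ⟨m, rfl, hm⟩
    exact absurd ⟨m, hm⟩ hT

end AuxGen
section AuxSpec

open HomologicalComplex

variable (R : Type u) [CommRing R]

/-- Replace the `a`-th component of a complex with zero differentials by `0`. -/
noncomputable def dropX (F : CochainComplex (ModuleCat.{u} R) ℤ) (a : ℤ) :
    CochainComplex (ModuleCat.{u} R) ℤ where
  X i := if i = a then ModuleCat.of R PUnit else F.X i
  d _ _ := 0
  shape _ _ _ := rfl

@[simp] lemma dropX_X (F : CochainComplex (ModuleCat.{u} R) ℤ) (a i : ℤ) :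
    (dropX R F a).X i = if i = a then ModuleCat.of R PUnit else F.X i := rfl

@[simp] lemma dropX_d (F : CochainComplex (ModuleCat.{u} R) ℤ) (a i j : ℤ) :
    (dropX R F a).d i j = 0 := rfl

lemma isZero_dropX_X (F : CochainComplex (ModuleCat.{u} R) ℤ) (a i : ℤ) (h : i = a) :
    IsZero ((dropX R F a).X i) := by
  rw [dropX_X, if_pos h]
  exact ModuleCat.isZero_of_subsingleton _

/-- The projection onto `dropX`. -/
noncomputable def dropXProj (F : CochainComplex (ModuleCat.{u} R) ℤ)
    (hd : ∀ i j, F.d i j = 0) (a : ℤ) : F ⟶ dropX R F a where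
  f i := if h : i = a then 0 else eqToHom (by rw [dropX_X, if_neg h])
  comm' i j _ := by rw [dropX_d, hd, comp_zero, zero_comp]

/-- The inclusion of `dropX`. -/
noncomputable def dropXInc (F : CochainComplex (ModuleCat.{u} R) ℤ)
    (hd : ∀ i j, F.d i j = 0) (a : ℤ) : dropX R F a ⟶ F where
  f i := if h : i = a then 0 else eqToHom (by rw [dropX_X, if_neg h])
  comm' i j _ := by rw [dropX_d, hd, comp_zero, zero_comp]

lemma dropXProj_f (F : CochainComplex (ModuleCat.{u} R) ℤ)
    (hd : ∀ i j, F.d i j = 0) (a i : ℤ) :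
    (dropXProj R F hd a).f i =
      if h : i = a then 0 else eqToHom (by rw [dropX_X, if_neg h]) := rfl

lemma dropXInc_f (F : CochainComplex (ModuleCat.{u} R) ℤ)
    (hd : ∀ i j, F.d i j = 0) (a i : ℤ) :
    (dropXInc R F hd a).f i =
      if h : i = a then 0 else eqToHom (by rw [dropX_X, if_neg h]) := rfl

lemma thick1_single (S : Set (DerivedCategory (ModuleCat.{u} R)))
    (hfree : ∀ N : ModuleCat.{u} R, Module.Free R N →
      (DerivedCategory.singleFunctor (ModuleCat.{u} R) 0).obj N ∈ S)
    (A : ModuleCat.{u} R) (hA : Module.Free R A) (j : ℤ) :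
    Thick1 S (DerivedCategory.Q.obj
      ((HomologicalComplex.single (ModuleCat.{u} R) (ComplexShape.up ℤ) j).obj A)) := by
  have h1 : Thick1 S (((DerivedCategory.singleFunctor (ModuleCat.{u} R) 0).obj A)⟦(-j)⟧) :=
    Thick1.shift (-j) (Thick1.of (hfree A hA))
  exact Thick1.iso
    ((((DerivedCategory.singleFunctors (ModuleCat.{u} R)).shiftIso (-j) j 0
        (by omega)).app A) ≪≫
      (((SingleFunctors.evaluation _ _ j).mapIso
        (DerivedCategory.singleFunctorsPostcompQIso (ModuleCat.{u} R))).app A)) h1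

lemma thick1_of_free_bounded (S : Set (DerivedCategory (ModuleCat.{u} R)))
    (hfree : ∀ N : ModuleCat.{u} R, Module.Free R N →
      (DerivedCategory.singleFunctor (ModuleCat.{u} R) 0).obj N ∈ S) :
    ∀ (k : ℕ) (a : ℤ) (F : CochainComplex (ModuleCat.{u} R) ℤ),
      (∀ i j, F.d i j = 0) → (∀ i, Module.Free R ↥(F.X i)) →
      (∀ i : ℤ, (i < a ∨ a + k ≤ i) → IsZero (F.X i)) →
      Thick1 S (DerivedCategory.Q.obj F) := by
  intro k
  induction k with
  | zero =>
    intro a F hd hfr hsupp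
    apply Thick1.zero
    apply DerivedCategory.Q.map_isZero
    rw [IsZero.iff_id_eq_zero]
    exact HomologicalComplex.hom_ext _ _ fun i => (hsupp i (by omega)).eq_of_src _ _
  | succ k ih =>
    intro a F hd hfr hsupp
    have hφ1 : ∀ (j : ℤ), (ComplexShape.up ℤ).Rel a j → 𝟙 (F.X a) ≫ F.d a j = 0 :=
      fun j _ => by rw [hd, comp_zero]
    have hφ2 : ∀ (j : ℤ), (ComplexShape.up ℤ).Rel j a → F.d j a ≫ 𝟙 (F.X a) = 0 :=
      fun j _ => by rw [hd, zero_comp]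
    refine Thick1.sum (thick1_single R S hfree (F.X a) (hfr a) a)
      (ih (a + 1) (dropX R F a) (fun _ _ => rfl) ?_ ?_)
      (IsBiprodObj.map DerivedCategory.Q
        ⟨mkHomFromSingle (𝟙 (F.X a)) hφ1, dropXInc R F hd a,
         mkHomToSingle (𝟙 (F.X a)) hφ2, dropXProj R F hd a, ?_, ?_, ?_, ?_, ?_⟩)
    · -- components of dropX are free
      intro i
      rw [dropX_X]
      by_cases h : i = a
      · rw [if_pos h]; infer_instance
      · rw [if_neg h]; exact hfr i
    · -- support of dropX
      intro i hi
      by_cases h : i = a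
      · exact isZero_dropX_X R F a i h
      · rw [dropX_X, if_neg h]
        exact hsupp i (by omega)
    · -- i ≫ p = 𝟙
      refine HomologicalComplex.hom_ext _ _ fun i => ?_
      by_cases h : i = a
      · subst h
        rw [HomologicalComplex.comp_f, mkHomFromSingle_f, mkHomToSingle_f]
        simp
      · exact (isZero_single_obj_X _ _ _ _ h).eq_of_src _ _
    · -- j ≫ q = 𝟙
      refine HomologicalComplex.hom_ext _ _ fun i => ?_
      by_cases h : i = a
      · exact (isZero_dropX_X R F a i h).eq_of_src _ _
      · rw [HomologicalComplex.comp_f, dropXInc_f, dropXProj_f, dif_neg h, dif_neg h,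
          eqToHom_trans, HomologicalComplex.id_f, eqToHom_refl]
    · -- i ≫ q = 0
      refine HomologicalComplex.hom_ext _ _ fun i => ?_
      by_cases h : i = a
      · rw [HomologicalComplex.comp_f, dropXProj_f, dif_pos h, comp_zero,
          HomologicalComplex.zero_f_apply]
      · exact (isZero_single_obj_X _ _ _ _ h).eq_of_src _ _
    · -- j ≫ p = 0
      refine HomologicalComplex.hom_ext _ _ fun i => ?_
      by_cases h : i = a
      · rw [HomologicalComplex.comp_f, dropXInc_f, dif_pos h, zero_comp,
          HomologicalComplex.zero_f_apply]
      · exact (isZero_single_obj_X _ _ _ _ h).eq_of_tgt _ _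
    · -- p ≫ i + q ≫ j = 𝟙
      refine HomologicalComplex.hom_ext _ _ fun i => ?_
      rw [HomologicalComplex.add_f_apply, HomologicalComplex.comp_f,
        HomologicalComplex.comp_f, HomologicalComplex.id_f]
      by_cases h : i = a
      · subst h
        rw [dropXProj_f, dif_pos rfl, zero_comp, add_zero, mkHomToSingle_f,
          mkHomFromSingle_f]
        simp
      · rw [dropXProj_f, dropXInc_f, dif_neg h, dif_neg h, eqToHom_trans, eqToHom_refl,
          (isZero_single_obj_X (ComplexShape.up ℤ) a (F.X a) i h).eq_of_tgt
            ((mkHomToSingle (𝟙 (F.X a)) hφ2).f i) 0,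
          zero_comp, zero_add]

lemma thickN_adamsStep (S : Set (DerivedCategory (ModuleCat.{u} R)))
    (hfree : ∀ N : ModuleCat.{u} R, Module.Free R N →
      (DerivedCategory.singleFunctor (ModuleCat.{u} R) 0).obj N ∈ S)
    {A B : CochainComplex (ModuleCat.{u} R) ℤ} (hAB : AdamsStep R A B) {m : ℕ}
    (hB : DerivedCategory.Q.obj B ∈ ThickN S m) :
    DerivedCategory.Q.obj A ∈ ThickN S (m + 1) := by
  obtain ⟨F, φ, f, h, hFfree, hFd, ⟨a, b, hb⟩, -, hT⟩ := hAB
  have hK : Thick1 S (DerivedCategory.Q.obj F) := by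
    refine thick1_of_free_bounded R S hfree (b - a + 1).toNat a F hFd hFfree ?_
    intro i hi
    exact hb i (by omega)
  exact thickN_step _ (rot_of_distTriang _ hT) hK (thickN_shift hB 1)

end AuxSpec
/-- for any collection `S` containing all free modules,
`level_S(M) ≤ level_S(Ωⁿ(M)) + n`. -/
theorem level_le_level_adamsSyzygy_add (R : Type u) [CommRing R] [IsNoetherianRing R]
    (M : CochainComplex (ModuleCat.{u} R) ℤ) (hM : HasBoundedHomology R M)
    (n : ℕ) (Ω : CochainComplex (ModuleCat.{u} R) ℤ) (hΩ : IsAdamsSyzygy R M n Ω)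
    (S : Set (DerivedCategory (ModuleCat.{u} R))) (hS : S.Nonempty)
    (hfree : ∀ N : ModuleCat.{u} R, Module.Free R N →
      (DerivedCategory.singleFunctor (ModuleCat.{u} R) 0).obj N ∈ S) :
    levelIn S (DerivedCategory.Q.obj M) ≤ levelIn S (DerivedCategory.Q.obj Ω) + n := by
  obtain ⟨seq, h0, hn, hstep⟩ := hΩ
  rcases levelIn_eq_top_or_mem S (DerivedCategory.Q.obj Ω) with htop | ⟨m, hm, hmem⟩
  · rw [htop, top_add]
    exact le_top
  · have claim : ∀ j : ℕ, j ≤ n → DerivedCategory.Q.obj (seq (n - j)) ∈ ThickN S (m + j) := by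
      intro j
      induction j with
      | zero =>
        intro _
        simpa [hn] using hmem
      | succ j ihj =>
        intro hj
        have hstep' := hstep (n - (j + 1)) (by omega)
        have heq : n - (j + 1) + 1 = n - j := by omega
        rw [heq] at hstep'
        exact thickN_adamsStep R S hfree hstep' (ihj (by omega))
    have hM0 : DerivedCategory.Q.obj M ∈ ThickN S (m + n) := by
      have := claim n le_rfl
      rwa [Nat.sub_self, h0] at this
    calc levelIn S (DerivedCategory.Q.obj M) ≤ ((m + n : ℕ) : ℕ∞) := levelIn_le hM0
      _ = levelIn S (DerivedCategory.Q.obj Ω) + n := by rw [hm]; push_cast; rfl
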